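/- Define v_n(x,s) for m = 3 by v_0 = 3, v_1 = x, v_2 = x^2, and v_n = x·v_{n-1} - s·v_{n-3} for n ≥ 3, and w_n(x,s) by w_0 = 3, w_1 = 0, w_2 = 2xs, and w_n = xs·w_{n-2} + s^2·w_{n-3} for n ≥ 3. Then v_n(1+x, x) - w_n(1+x, x) - 1 + (-x)^n = 0 for all n ≥ 0, as polynomials in x. -/
import Mathlib

/-- `v_n(x,s)` for `m = 3`: `v_0 = 3`, `v_1 = x`, `v_2 = x²`, `v_n = x·v_{n-1} - s·v_{n-3}`. -/
def v3 {R : Type*} [CommRing R] (x s : R) : ℕ → R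
  | 0 => 3
  | 1 => x
  | 2 => x ^ 2
  | n + 3 => x * v3 x s (n + 2) - s * v3 x s n

/-- `w_n(x,s)` for `m = 3`: `w_0 = 3`, `w_1 = 0`, `w_2 = 2xs`, `w_n = xs·w_{n-2} + s²·w_{n-3}`. -/
def w3 {R : Type*} [CommRing R] (x s : R) : ℕ → R
  | 0 => 3
  | 1 => 0
  | 2 => 2 * x * s
  | n + 3 => x * s * w3 x s (n + 1) + s ^ 2 * w3 x s n

open Polynomial

/-- auxiliary sequence: `p 0 = 2`, `p 1 = X`, `p (n+2) = X p (n+1) + X p n`. -/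
noncomputable def paux : ℕ → Polynomial ℤ
  | 0 => 2
  | 1 => X
  | n + 2 => X * paux (n + 1) + X * paux n

lemma v3_eq : ∀ n : ℕ, v3 (1 + X) X n = 1 + paux n
  | 0 => by simp [v3, paux]; ring
  | 1 => by simp [v3, paux]
  | 2 => by
      show (1 + X) ^ 2 = 1 + paux 2
      rw [paux]; simp [paux]; ring
  | n + 3 => by
      rw [show v3 (1 + X) X (n + 3)
            = (1 + X) * v3 (1 + X) X (n + 2) - X * v3 (1 + X) X n from rfl,
          v3_eq (n + 2), v3_eq n]
      have h : paux (n + 2) = X * paux (n + 1) + X * paux n := by rw [paux]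
      have h3 : paux (n + 3) = X * paux (n + 2) + X * paux (n + 1) := by rw [paux]
      linear_combination h - h3

lemma w3_eq : ∀ n : ℕ, w3 (1 + X) X n = (-X) ^ n + paux n
  | 0 => by simp [w3, paux]; ring
  | 1 => by simp [w3, paux]
  | 2 => by
      show 2 * (1 + X) * X = (-X) ^ 2 + paux 2
      rw [paux]; simp [paux]; ring
  | n + 3 => by
      rw [show w3 (1 + X) X (n + 3)
            = (1 + X) * X * w3 (1 + X) X (n + 1) + X ^ 2 * w3 (1 + X) X n from rfl,
          w3_eq (n + 1), w3_eq n]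
      have h : paux (n + 2) = X * paux (n + 1) + X * paux n := by rw [paux]
      have h3 : paux (n + 3) = X * paux (n + 2) + X * paux (n + 1) := by rw [paux]
      linear_combination -h3 - X * h

open Polynomial in
theorem v3_sub_w3 (n : ℕ) :
    v3 (1 + X) X n - w3 (1 + X) X n - 1 + (-X : Polynomial ℤ) ^ n = 0 := by
  rw [v3_eq n, w3_eq n]; ring
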